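/- arXiv:2112.03655 — 2 statements merged into one kernel-verified Lean document; each statement's English description precedes it below -/
import Mathlib

section
/- Let G be a finite connected simple graph and let i, j, v be vertices of G. Then f_G(i,v) + f_G(v,j) − f_G(i,j) = 2·|𝓕_G(i,j;v)|, where 𝓕_G(i,j;v) is the set of 2-forests of G in which i and j lie in the same component and v lies in the other component. In particular f_G(i,v) + f_G(v,j) − f_G(i,j) ≥ 0. -/
open SimpleGraph Filter

namespace Braess

universe u

variable {V : Type*}

/-- The number of spanning trees of `G`. -/
noncomputable def tau (G : SimpleGraph V) : ℕ :=
  Nat.card {H : SimpleGraph V // H ≤ G ∧ H.IsTree}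

/-- `H` is a 2-forest (spanning forest with exactly two components) of `G`. -/
def IsTwoForest (G H : SimpleGraph V) : Prop :=
  H ≤ G ∧ H.IsAcyclic ∧ Nat.card H.ConnectedComponent = 2

/-- `f_G(i,j)`: the number of 2-forests of `G` with `i` and `j` in different components. -/
noncomputable def fsep (G : SimpleGraph V) (i j : V) : ℕ :=
  Nat.card {H : SimpleGraph V // IsTwoForest G H ∧ ¬ H.Reachable i j}

/-- `q_{i,j}`: the number of 2-forests of `G` with `i` and `j` in one component and `v`
in the other. -/
noncomputable def qEntry (G : SimpleGraph V) (v i j : V) : ℕ :=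
  Nat.card {H : SimpleGraph V // IsTwoForest G H ∧ H.Reachable i j ∧ ¬ H.Reachable i v}

/-- Degree of a vertex. -/
noncomputable def deg (G : SimpleGraph V) (i : V) : ℕ :=
  Nat.card (G.neighborSet i)

/-- Number of edges of `G`. -/
noncomputable def edgeCount (G : SimpleGraph V) : ℕ :=
  Nat.card G.edgeSet

/-- `d_G^T F_G d_G`. -/
noncomputable def dFd (G : SimpleGraph V) : ℚ :=
  ∑ᶠ i, ∑ᶠ j, (deg G i : ℚ) * (fsep G i j : ℚ) * (deg G j : ℚ)

/-- `d_G^T f^v_G`. -/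
noncomputable def dfv (G : SimpleGraph V) (v : V) : ℚ :=
  ∑ᶠ i, (deg G i : ℚ) * (fsep G i v : ℚ)

/-- `d_G^T Q_{G,v} d_G`. -/
noncomputable def dQd (G : SimpleGraph V) (v : V) : ℚ :=
  ∑ᶠ i, ∑ᶠ j, (deg G i : ℚ) * (qEntry G v i j : ℚ) * (deg G j : ℚ)

/-- `φ_G(v) = d_G^T (2 f^v_G 𝟙^T − F_G) d_G`. -/
noncomputable def phi (G : SimpleGraph V) (v : V) : ℚ :=
  ∑ᶠ i, ∑ᶠ j, (deg G i : ℚ) * (2 * (fsep G i v : ℚ) - (fsep G i j : ℚ)) * (deg G j : ℚ)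

/-- Kemeny's constant, via the combinatorial formula. -/
noncomputable def kemeny (G : SimpleGraph V) : ℚ :=
  dFd G / (4 * (edgeCount G : ℚ) * (tau G : ℚ))

/-- Eccentricity of a vertex. -/
noncomputable def ecc (G : SimpleGraph V) (v : V) : ℕ :=
  sSup (Set.range (G.dist v))

/-- The graph `G̃(v,k₁,k₂)`, obtained from `G` by attaching at `v` two pendent paths
with `k₁` and `k₂` new vertices respectively. -/
def attach (G : SimpleGraph V) (v : V) (k₁ k₂ : ℕ) :
    SimpleGraph (V ⊕ (Fin k₁ ⊕ Fin k₂)) where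
  Adj x y :=
    match x, y with
    | .inl a, .inl b => G.Adj a b
    | .inl a, .inr (.inl i) => a = v ∧ (i : ℕ) = 0
    | .inl a, .inr (.inr i) => a = v ∧ (i : ℕ) = 0
    | .inr (.inl i), .inl b => b = v ∧ (i : ℕ) = 0
    | .inr (.inr i), .inl b => b = v ∧ (i : ℕ) = 0
    | .inr (.inl i), .inr (.inl j) => (i : ℕ) + 1 = (j : ℕ) ∨ (j : ℕ) + 1 = (i : ℕ)
    | .inr (.inr i), .inr (.inr j) => (i : ℕ) + 1 = (j : ℕ) ∨ (j : ℕ) + 1 = (i : ℕ)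
    | .inr (.inl _), .inr (.inr _) => False
    | .inr (.inr _), .inr (.inl _) => False
  symm := by
    constructor
    rintro (a | (i | i)) (b | (j | j)) h
    · exact G.adj_symm h
    · exact h
    · exact h
    · exact h
    · exact h.symm
    · exact h.elim
    · exact h
    · exact h.elim
    · exact h.symm
  loopless := by
    constructor
    rintro (a | (i | i)) h
    · exact G.loopless.irrefl a h
    · omega
    · omega

/-- The far endpoint of the first attached path (it is `v` itself when `k₁ = 0`). -/
def farEnd₁ (v : V) (k₁ k₂ : ℕ) : V ⊕ (Fin k₁ ⊕ Fin k₂) :=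
  if h : 0 < k₁ then .inr (.inl ⟨k₁ - 1, by omega⟩) else .inl v

/-- The far endpoint of the second attached path (it is `v` itself when `k₂ = 0`). -/
def farEnd₂ (v : V) (k₁ k₂ : ℕ) : V ⊕ (Fin k₁ ⊕ Fin k₂) :=
  if h : 0 < k₂ then .inr (.inr ⟨k₂ - 1, by omega⟩) else .inl v

/-- The graph `Ĝ(v,k₁,k₂)`: `G̃(v,k₁,k₂)` together with the extra edge joining the far
endpoints of the two attached paths. -/
def attachEdge (G : SimpleGraph V) (v : V) (k₁ k₂ : ℕ) :
    SimpleGraph (V ⊕ (Fin k₁ ⊕ Fin k₂)) :=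
  attach G v k₁ k₂ ⊔ fromEdgeSet {s(farEnd₁ v k₁ k₂, farEnd₂ v k₁ k₂)}

/-- `G` is `(v,k₁,k₂)`-paradoxical. -/
def IsParadoxical (G : SimpleGraph V) (v : V) (k₁ k₂ : ℕ) : Prop :=
  kemeny (attach G v k₁ k₂) < kemeny (attachEdge G v k₁ k₂)

/-- `φ₁(k₁,k₂)`. -/
noncomputable def kphi₁ (k₁ k₂ : ℕ) : ℚ :=
  -(2 / 3) * ((k₁ : ℚ) + k₂) * ((k₁ : ℚ) + k₂ - 1) + 2 * k₁ * k₂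

/-- `φ₂(k₁,k₂)`. -/
noncomputable def kphi₂ (k₁ k₂ : ℕ) : ℚ :=
  -((k₁ : ℚ) + k₂) * (5 * ((k₁ : ℚ) + k₂) ^ 2 - ((k₁ : ℚ) + k₂) - 1)
    + 12 * k₁ * k₂ * ((k₁ : ℚ) + k₂ + 1)

/-- `φ₃(k₁,k₂)`. -/
noncomputable def kphi₃ (k₁ k₂ : ℕ) : ℚ :=
  -((k₁ : ℚ) + k₂ + 1) * ((k₁ : ℚ) + k₂) * ((k₁ : ℚ) + k₂ - 1) ^ 2

/-- `Φ_G(v,k₁,k₂)`, with `k = k₁ + k₂ + 1`. -/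
noncomputable def Phi (G : SimpleGraph V) (v : V) (k₁ k₂ : ℕ) : ℚ :=
  ((k₁ : ℚ) + k₂ + 1) * phi G v
    + 4 * (edgeCount G : ℚ) ^ 2 * (tau G : ℚ) * ((k₁ : ℚ) + k₂ + 1) * kphi₁ k₁ k₂
    + (2 * (edgeCount G : ℚ) * (tau G : ℚ) * ((k₁ : ℚ) + k₂ + 1) / 3) * kphi₂ k₁ k₂
    + (2 * (tau G : ℚ) * ((k₁ : ℚ) + k₂ + 1) / 3) * kphi₃ k₁ k₂

/-- A sequence of graphs with specified vertices is asymptotically paradoxical. -/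
def AsympParadoxical {W : ℕ → Type u} (G : ∀ n, SimpleGraph (W n)) (v : ∀ n, W n) : Prop :=
  ∀ l₁ l₂ : ℕ, 2 ≤ l₁ + l₂ → ∃ N, ∀ n ≥ N, IsParadoxical (G n) (v n) l₁ l₂

section Glue

variable {V₁ V₂ : Type*}

/-- The graph obtained from `H₁` and `H₂` by identifying `v₁ ∈ V(H₁)` and `v₂ ∈ V(H₂)` as a
single vertex (represented by `Sum.inl v₁`). -/
def glue (H₁ : SimpleGraph V₁) (H₂ : SimpleGraph V₂) (v₁ : V₁) (v₂ : V₂) :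
    SimpleGraph (V₁ ⊕ {x : V₂ // x ≠ v₂}) where
  Adj x y :=
    match x, y with
    | .inl a, .inl b => H₁.Adj a b
    | .inl a, .inr b => a = v₁ ∧ H₂.Adj v₂ b.1
    | .inr a, .inl b => b = v₁ ∧ H₂.Adj v₂ a.1
    | .inr a, .inr b => H₂.Adj a.1 b.1
  symm := by
    constructor
    rintro (a | a) (b | b) h
    · exact H₁.adj_symm h
    · exact h
    · exact h
    · exact H₂.adj_symm h
  loopless := by
    constructor
    rintro (a | a) h
    · exact H₁.loopless.irrefl a h
    · exact H₂.loopless.irrefl a.1 h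

/-- The canonical map from `V₂` to the vertex set of the glued graph. -/
def glueRight [DecidableEq V₂] (v₁ : V₁) (v₂ : V₂) (x : V₂) : V₁ ⊕ {y : V₂ // y ≠ v₂} :=
  if h : x = v₂ then .inl v₁ else .inr ⟨x, h⟩

end Glue

section MultiGlue

variable {ι : Type*} {W : ι → Type*} {V₀ : Type*}

/-- The graph obtained from the family `H i` and `G` by identifying all the vertices `w i`
and `v` as a single vertex (represented by `Sum.inl v`). -/
def multiGlue (H : ∀ i, SimpleGraph (W i)) (w : ∀ i, W i)
    (G : SimpleGraph V₀) (v : V₀) :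
    SimpleGraph (V₀ ⊕ Σ i, {x : W i // x ≠ w i}) where
  Adj x y :=
    match x, y with
    | .inl a, .inl b => G.Adj a b
    | .inl a, .inr ⟨i, b⟩ => a = v ∧ (H i).Adj (w i) b.1
    | .inr ⟨i, a⟩, .inl b => b = v ∧ (H i).Adj (w i) a.1
    | .inr ⟨i, a⟩, .inr ⟨j, b⟩ => ∃ h : i = j, (H j).Adj (h ▸ a).1 b.1
  symm := by
    constructor
    rintro (a | ⟨i, a⟩) (b | ⟨j, b⟩) h
    · exact G.adj_symm h
    · exact h
    · exact h
    · obtain ⟨rfl, h⟩ := h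
      exact ⟨rfl, (H i).adj_symm h⟩
  loopless := by
    constructor
    rintro (a | ⟨i, a⟩) h
    · exact G.loopless.irrefl a h
    · obtain ⟨h', h⟩ := h
      exact (H i).loopless.irrefl a.1 h

end MultiGlue

/-- The broom `𝓑_{n,k}`: a path on the `k` vertices `0, 1, …, k−1` together with `n − k`
pendent vertices (the vertices `k, …, n−1`) all adjacent to the vertex `0`. -/
def broomGraph (n k : ℕ) : SimpleGraph (Fin n) where
  Adj i j :=
    ((i : ℕ) + 1 = (j : ℕ) ∧ (j : ℕ) < k) ∨ ((j : ℕ) + 1 = (i : ℕ) ∧ (i : ℕ) < k) ∨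
      ((i : ℕ) = 0 ∧ k ≤ (j : ℕ) ∧ i ≠ j) ∨ ((j : ℕ) = 0 ∧ k ≤ (i : ℕ) ∧ i ≠ j)
  symm := by
    constructor
    intro i j h
    tauto
  loopless := by
    constructor
    rintro i (⟨h, -⟩ | ⟨h, -⟩ | ⟨-, -, h⟩ | ⟨-, -, h⟩)
    · omega
    · omega
    · exact h rfl
    · exact h rfl

section Branch

variable (G : SimpleGraph V) (v : V)

/-- The vertex set of the branch of `G` at `v` corresponding to the connected component `c`
of `G − v`. -/
def branchSet (c : (G.induce {x : V | x ≠ v}).ConnectedComponent) : Set V :=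
  insert v {x : V | ∃ h : x ≠ v,
    (G.induce {x : V | x ≠ v}).connectedComponentMk ⟨x, h⟩ = c}

/-- The vertex set of the complementary part `G'_c`: everything outside the branch at `c`,
together with `v`. -/
def cobranchSet (c : (G.induce {x : V | x ≠ v}).ConnectedComponent) : Set V :=
  insert v {x : V | ∃ h : x ≠ v,
    (G.induce {x : V | x ≠ v}).connectedComponentMk ⟨x, h⟩ ≠ c}

end Branch

section Sequence

/-- `Tnew` is obtained from `Told` by adding one new pendent vertex (the last vertex). -/
def AddPendentStep {n : ℕ} (Told : SimpleGraph (Fin (n + 1)))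
    (Tnew : SimpleGraph (Fin (n + 2))) : Prop :=
  (∀ a b : Fin (n + 1), Tnew.Adj a.castSucc b.castSucc ↔ Told.Adj a b) ∧
    ∃ u : Fin (n + 1), ∀ x : Fin (n + 1), Tnew.Adj (Fin.last (n + 1)) x.castSucc ↔ x = u

/-- `Tnew` is obtained from `Told` by subdividing one edge, the new (last) vertex being
placed in the middle of it. -/
def SubdivideStep {n : ℕ} (Told : SimpleGraph (Fin (n + 1)))
    (Tnew : SimpleGraph (Fin (n + 2))) : Prop :=
  ∃ a b : Fin (n + 1), Told.Adj a b ∧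
    (∀ x y : Fin (n + 1), Tnew.Adj x.castSucc y.castSucc ↔ (Told.Adj x y ∧ s(x, y) ≠ s(a, b))) ∧
    (∀ x : Fin (n + 1), Tnew.Adj (Fin.last (n + 1)) x.castSucc ↔ (x = a ∨ x = b))

/-- The vertex set of the branch of `T` at the vertex `0` containing the vertex `w`. -/
def branchSetAt {m : ℕ} (T : SimpleGraph (Fin (m + 1))) (w : Fin (m + 1)) :
    Set (Fin (m + 1)) :=
  insert 0 {y : Fin (m + 1) | ∃ (hy : y ≠ 0) (hw : w ≠ 0),
    (T.induce {z : Fin (m + 1) | z ≠ 0}).Reachable ⟨y, hy⟩ ⟨w, hw⟩}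

/-- The eccentricity of the vertex `0` in the branch of `T` at `0` containing `w`. -/
noncomputable def branchEcc {m : ℕ} (T : SimpleGraph (Fin (m + 1))) (w : Fin (m + 1)) : ℕ :=
  ecc (T.induce (branchSetAt T w)) ⟨0, Set.mem_insert _ _⟩

/-- `f = Θ(g)` (big Theta) for `ℕ`-valued sequences. -/
def IsBigTheta (f g : ℕ → ℕ) : Prop :=
  ∃ c₁ c₂ : ℚ, 0 < c₁ ∧ 0 < c₂ ∧
    ∃ N, ∀ n ≥ N, c₁ * (g n : ℚ) ≤ (f n : ℚ) ∧ (f n : ℚ) ≤ c₂ * (g n : ℚ)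

/-- `β_n`: the number of branches of `T n` at the vertex `0` whose eccentricity function (in
later members of the sequence, under the consistent indexing that tracks each branch by the
vertices it contains) is `Θ` of the eccentricity of `0`. -/
noncomputable def beta (T : ∀ n : ℕ, SimpleGraph (Fin (n + 1))) (n : ℕ) : ℕ :=
  Nat.card {c : ((T n).induce {z : Fin (n + 1) | z ≠ 0}).ConnectedComponent //
    ∃ (x : Fin (n + 1)) (hx : x ≠ 0),
      ((T n).induce {z : Fin (n + 1) | z ≠ 0}).connectedComponentMk ⟨x, hx⟩ = c ∧
      IsBigTheta
        (fun m => if h : n ≤ m then branchEcc (T m) (Fin.castLE (by omega) x) else 0)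
        (fun m => ecc (T m) 0)}

end Sequence

/-!
A 2-forest that separates two of the vertices `i, j, v` isolates exactly one of the three
from the other two. Each of `f(i,v)`, `f(v,j)`, `f(i,j)` is therefore the sum of two of the
three classes "`i` alone", "`j` alone", "`v` alone", and in the alternating sum only twice the
class "`v` alone" survives.
-/

theorem reachable_or_reachable_of_card_connectedComponent_eq_two
    {H : SimpleGraph V} (h2 : Nat.card H.ConnectedComponent = 2) {x y : V}
    (hxy : ¬H.Reachable x y) (z : V) : H.Reachable x z ∨ H.Reachable y z := by
  by_contra! hz
  obtain ⟨w, -, hunique⟩ := (Nat.card_eq_two_iff' (H.connectedComponentMk z)).mp h2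
  have hx : H.connectedComponentMk x ≠ H.connectedComponentMk z :=
    fun h => hz.1 (ConnectedComponent.eq.mp h)
  have hy : H.connectedComponentMk y ≠ H.connectedComponentMk z :=
    fun h => hz.2 (ConnectedComponent.eq.mp h)
  exact hxy (ConnectedComponent.eq.mp ((hunique _ hx).trans (hunique _ hy).symm))

theorem qEntry_comm (G : SimpleGraph V) (v i j : V) : qEntry G v i j = qEntry G v j i :=
  Nat.card_congr <| Equiv.subtypeEquivRight fun _ =>
    ⟨fun ⟨hF, hij, hiv⟩ => ⟨hF, hij.symm, fun hjv => hiv (hij.trans hjv)⟩,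
      fun ⟨hF, hji, hjv⟩ => ⟨hF, hji.symm, fun hiv => hjv (hji.trans hiv)⟩⟩

theorem fsep_eq_qEntry_add_qEntry [Finite V] (G : SimpleGraph V) (x y z : V) :
    fsep G x y = qEntry G y x z + qEntry G x y z := by
  classical
  have hsplit : ∀ H : SimpleGraph V, IsTwoForest G H ∧ ¬H.Reachable x y ↔
      (IsTwoForest G H ∧ H.Reachable x z ∧ ¬H.Reachable x y) ∨
        (IsTwoForest G H ∧ H.Reachable y z ∧ ¬H.Reachable y x) := by
    intro H
    constructor
    · rintro ⟨hF, hxy⟩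
      exact (reachable_or_reachable_of_card_connectedComponent_eq_two hF.2.2 hxy z).imp
        (fun hxz => ⟨hF, hxz, hxy⟩) fun hyz => ⟨hF, hyz, fun hyx => hxy hyx.symm⟩
    · rintro (⟨hF, -, hxy⟩ | ⟨hF, -, hyx⟩)
      exacts [⟨hF, hxy⟩, ⟨hF, fun hxy => hyx hxy.symm⟩]
  have hdisj : Disjoint (fun H : SimpleGraph V => IsTwoForest G H ∧ H.Reachable x z ∧
      ¬H.Reachable x y) (fun H => IsTwoForest G H ∧ H.Reachable y z ∧ ¬H.Reachable y x) := by
    rw [Pi.disjoint_iff]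
    intro H
    rw [disjoint_iff_inf_le]
    rintro ⟨⟨-, hxz, hxy⟩, -, hyz, -⟩
    exact hxy (hxz.trans hyz.symm)
  exact (Nat.card_congr ((Equiv.subtypeEquivRight hsplit).trans
    (subtypeOrEquiv _ _ hdisj))).trans Nat.card_sum

theorem stmt_8_general {V : Type*} [Fintype V] (G : SimpleGraph V) (i j v : V) :
    ((fsep G i v : ℤ) + (fsep G v j : ℤ) - (fsep G i j : ℤ) = 2 * (qEntry G v i j : ℤ)) ∧
    (0 ≤ (fsep G i v : ℤ) + (fsep G v j : ℤ) - (fsep G i j : ℤ)) := by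
  have hsum : (fsep G i v : ℤ) + fsep G v j - fsep G i j = 2 * qEntry G v i j := by
    rw [fsep_eq_qEntry_add_qEntry G i v j, fsep_eq_qEntry_add_qEntry G v j i,
      fsep_eq_qEntry_add_qEntry G i j v, qEntry_comm G v j i, qEntry_comm G i v j,
      qEntry_comm G j v i]
    push_cast
    ring
  exact ⟨hsum, hsum ▸ by positivity⟩

/-- `f(i,v) + f(v,j) − f(i,j) = 2·|𝓕_G(i,j;v)| ≥ 0`. -/
theorem stmt_8 {V : Type*} [Fintype V] (G : SimpleGraph V) (hG : G.Connected) (i j v : V) :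
    ((fsep G i v : ℤ) + (fsep G v j : ℤ) - (fsep G i j : ℤ) = 2 * (qEntry G v i j : ℤ)) ∧
    (0 ≤ (fsep G i v : ℤ) + (fsep G v j : ℤ) - (fsep G i j : ℤ)) :=
  stmt_8_general G i j v

end Braess
end

section
/- Let G be a finite connected simple graph with at least 2 vertices, and let v be any vertex of G. Then φ_G(v) = d_G^T (2 f^v_G 𝟙^T − F_G) d_G > 0. -/
open SimpleGraph Filter

/-!
The symmetrization `φ_G(v) = ∑ᵢ ∑ⱼ dᵢ dⱼ (f(i,v) + f(j,v) − f(i,j))` reduces the claim to two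
facts about `f`. First, `f` satisfies the triangle inequality `f(i,j) ≤ f(i,v) + f(j,v)`: a
2-forest separating `i` from `j` separates `v` from `i` or from `j`. Hence every term is
nonnegative. Second, `f(w,v) > 0` for `w ≠ v`, since a maximal acyclic subgraph of `G` that
does not join `v` to `w` is a 2-forest. The diagonal term `d_w² · 2 f(w,v)` is then positive.
-/

namespace SimpleGraph

variable {V : Type*} {G H : SimpleGraph V}

lemma Reachable.cases_of_sup_edge {a b x y : V} (h : (H ⊔ edge a b).Reachable x y) :
    H.Reachable x y ∨ (H.Reachable x a ∧ H.Reachable b y) ∨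
      (H.Reachable x b ∧ H.Reachable a y) := by
  obtain ⟨p⟩ := h
  induction p with
  | nil => exact Or.inl .rfl
  | cons hadj _ ih =>
    rw [sup_adj, edge_adj] at hadj
    rcases hadj with hadj | ⟨⟨rfl, rfl⟩ | ⟨rfl, rfl⟩, -⟩
    · rcases ih with hr | ⟨h₁, h₂⟩ | ⟨h₁, h₂⟩
      · exact Or.inl (hadj.reachable.trans hr)
      · exact Or.inr (Or.inl ⟨hadj.reachable.trans h₁, h₂⟩)
      · exact Or.inr (Or.inr ⟨hadj.reachable.trans h₁, h₂⟩)
    · rcases ih with hr | ⟨h₁, h₂⟩ | ⟨-, h₂⟩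
      · exact Or.inr (Or.inl ⟨.rfl, hr⟩)
      · exact Or.inl (h₁.symm.trans h₂)
      · exact Or.inl h₂
    · rcases ih with hr | ⟨-, h₂⟩ | ⟨h₁, h₂⟩
      · exact Or.inr (Or.inr ⟨.rfl, hr⟩)
      · exact Or.inl h₂
      · exact Or.inl (h₁.symm.trans h₂)

lemma nat_card_connectedComponent_eq_two {v w : V} (hvw : ¬H.Reachable v w)
    (hcover : ∀ x, H.Reachable x v ∨ H.Reachable x w) :
    Nat.card H.ConnectedComponent = 2 := by
  rw [Nat.card_eq_two_iff]
  refine ⟨H.connectedComponentMk v, H.connectedComponentMk w,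
    fun h => hvw (ConnectedComponent.exact h), Set.eq_univ_of_forall fun c => ?_⟩
  induction c using ConnectedComponent.ind with
  | h x =>
    rcases hcover x with h | h
    · exact Or.inl (ConnectedComponent.sound h)
    · exact Or.inr (ConnectedComponent.sound h)

lemma reachable_or_reachable_of_maximal {v w : V} (hG : G.Connected)
    (hH : Maximal (fun H => H ≤ G ∧ H.IsAcyclic ∧ ¬H.Reachable v w) H) (x : V) :
    H.Reachable x v ∨ H.Reachable x w := by
  obtain ⟨⟨hle, hacyc, hvw⟩, hmax⟩ := hH
  have step : ∀ ⦃a b⦄, G.Adj a b →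
      (H.Reachable a v ∨ H.Reachable a w) → H.Reachable b v ∨ H.Reachable b w := by
    intro a b hab ha
    by_cases hr : H.Reachable a b
    · exact ha.imp hr.symm.trans hr.symm.trans
    -- adding the edge `ab` keeps `H` acyclic, so by maximality it must join `v` to `w`
    have hjoin : (H ⊔ edge a b).Reachable v w := by
      by_contra hsep
      have hle' : H ⊔ edge a b ≤ H :=
        hmax ⟨sup_le hle ((edge_le_iff _).mpr (Or.inr hab)), hacyc.sup_edge_of_not_reachable hr,
          hsep⟩ le_sup_left
      exact hr (hle' (by simp [edge_adj, hab.ne])).reachable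
    rcases hjoin.cases_of_sup_edge with h | ⟨-, hbw⟩ | ⟨hvb, -⟩
    · exact absurd h hvw
    · exact Or.inr hbw
    · exact Or.inl hvb.symm
  suffices ∀ {y z} (p : G.Walk y z), (H.Reachable y v ∨ H.Reachable y w) →
      H.Reachable z v ∨ H.Reachable z w from
    this (hG.preconnected v x).some (Or.inl .rfl)
  intro y z p
  induction p with
  | nil => exact id
  | cons hadj _ ih => exact fun hy => ih (step hadj hy)

end SimpleGraph

theorem Finset.sum_sum_two_mul_sub_eq {ι R : Type*} [Fintype ι] [CommRing R] (d g : ι → R)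
    (F : ι → ι → R) :
    ∑ i, ∑ j, d i * (2 * g i - F i j) * d j = ∑ i, ∑ j, d i * d j * (g i + g j - F i j) := by
  have hswap : ∑ i, ∑ j, d i * d j * g j = ∑ i, ∑ j, d i * d j * g i := by
    rw [Finset.sum_comm]
    exact Finset.sum_congr rfl fun i _ => Finset.sum_congr rfl fun j _ => by ring
  calc ∑ i, ∑ j, d i * (2 * g i - F i j) * d j
      = ∑ i, ∑ j, (d i * d j * g i + d i * d j * g i - d i * d j * F i j) := by
        simp only [mul_sub, sub_mul, two_mul, mul_add, add_mul, mul_right_comm]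
    _ = ∑ i, ∑ j, (d i * d j * g i + d i * d j * g j - d i * d j * F i j) := by
        simp only [Finset.sum_sub_distrib, Finset.sum_add_distrib, hswap]
    _ = ∑ i, ∑ j, d i * d j * (g i + g j - F i j) := by
        simp only [mul_add, mul_sub]

namespace Braess

variable {V : Type*} {G : SimpleGraph V}

lemma exists_isTwoForest_not_reachable [Finite V] (hG : G.Connected) {v w : V} (hvw : v ≠ w) :
    ∃ H, IsTwoForest G H ∧ ¬H.Reachable v w := by
  obtain ⟨H, -, hH⟩ := Finite.exists_le_maximal
    (p := fun H : SimpleGraph V => H ≤ G ∧ H.IsAcyclic ∧ ¬H.Reachable v w)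
    (a := ⊥) ⟨bot_le, isAcyclic_bot, by simpa [reachable_bot] using hvw⟩
  obtain ⟨hle, hacyc, hsep⟩ := hH.prop
  exact ⟨H, ⟨hle, hacyc, nat_card_connectedComponent_eq_two hsep
    (reachable_or_reachable_of_maximal hG hH)⟩, hsep⟩

lemma fsep_eq_ncard (G : SimpleGraph V) (i j : V) :
    fsep G i j = {H | IsTwoForest G H ∧ ¬H.Reachable i j}.ncard := rfl

lemma fsep_self (G : SimpleGraph V) (i : V) : fsep G i i = 0 := by
  simp [fsep_eq_ncard]

lemma fsep_pos [Finite V] (hG : G.Connected) {v w : V} (hvw : v ≠ w) : 0 < fsep G v w := by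
  obtain ⟨H, hH⟩ := exists_isTwoForest_not_reachable hG hvw
  exact (Set.ncard_pos).mpr ⟨H, hH⟩

lemma fsep_le_add [Finite V] (G : SimpleGraph V) (i j v : V) :
    fsep G i j ≤ fsep G i v + fsep G j v := by
  simp only [fsep_eq_ncard]
  refine (Set.ncard_le_ncard ?_).trans (Set.ncard_union_le _ _)
  rintro H ⟨hF, hij⟩
  by_contra h
  simp only [Set.mem_union, Set.mem_ofPred_eq, hF, true_and, not_or, not_not] at h
  exact hij (h.1.trans h.2.symm)

lemma deg_pos [Finite V] [Nontrivial V] (hG : G.Connected) (x : V) : 0 < deg G x := by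
  obtain ⟨y, hxy⟩ := hG.preconnected.exists_adj_of_nontrivial x
  have : Nonempty (G.neighborSet x) := ⟨⟨y, hxy⟩⟩
  exact Nat.card_pos

lemma phi_eq_sum_sum [Fintype V] (G : SimpleGraph V) (v : V) :
    phi G v = ∑ i, ∑ j, (deg G i : ℚ) * deg G j * (fsep G i v + fsep G j v - fsep G i j) := by
  simp only [phi, finsum_eq_sum_of_fintype]
  exact Finset.sum_sum_two_mul_sub_eq _ _ _

/-- `φ_G(v) > 0` for any connected graph on at least two vertices. -/
theorem stmt_9 {V : Type*} [Fintype V] (G : SimpleGraph V) (hG : G.Connected)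
    (hV : 2 ≤ Fintype.card V) (v : V) : 0 < phi G v := by
  have : Nontrivial V := Fintype.one_lt_card_iff_nontrivial.mp hV
  obtain ⟨w, hwv⟩ := exists_ne v
  have hterm (i j : V) :
      0 ≤ (deg G i : ℚ) * deg G j * (fsep G i v + fsep G j v - fsep G i j) := by
    have : (fsep G i j : ℚ) ≤ fsep G i v + fsep G j v := by exact_mod_cast fsep_le_add G i j v
    exact mul_nonneg (by positivity) (by linarith)
  have hdiag : 0 < (deg G w : ℚ) * deg G w * (fsep G w v + fsep G w v - fsep G w w) := by
    have := deg_pos hG w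
    have := fsep_pos hG hwv
    rw [fsep_self, Nat.cast_zero, sub_zero]
    positivity
  rw [phi_eq_sum_sum]
  exact Finset.sum_pos' (fun i _ => Finset.sum_nonneg fun j _ => hterm i j)
    ⟨w, Finset.mem_univ w, Finset.sum_pos' (fun j _ => hterm w j) ⟨w, Finset.mem_univ w, hdiag⟩⟩

end Braess
end
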